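/- For each n, k ≥ 2, RCA*₀ proves the equivalence RT^n_k ↔ RT^n_{k+1}. -/

import Mathlib

/-
A formalization framework for second-order arithmetic over weak base theories,
following "Ramsey's theorem over RCA*₀".

We deep-embed the two-sorted language of second-order arithmetic
(number variables, set variables; 0, 1, +, ·, <, ∈) with de Bruijn indices,
define Tarskian satisfaction in a structure (M, 𝒳), the syntactic classes
Δ₀ / Σ_n / Π_n (with bounded quantifiers), the induction, collection and
Δ⁰₁-comprehension schemes, the theories PA⁻, IΣ_n, BΣ_n, RCA*₀, RCA₀,
Ramsey's theorem RT^n_k, Ackermann coding, cuts and Cod(M/I), definable sets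
(boldface and lightface), GPHP and CΣ, and first-order consequence sets.

The axiom `exp` (totality of x ↦ 2^x) is rendered via `ExpRel`:
y = 2^x iff some Δ₀-definable (set-free, with parameters) function witnesses the
doubling recursion from 0 to x; over IΔ₀ this is extensionally the graph of
exponentiation, and `ExpTotal` is the axiom exp.
-/

namespace RM

/-- Terms of arithmetic (number sort), with de Bruijn number variables. -/
inductive Term : Type
  | var : ℕ → Term
  | zero : Term
  | one : Term
  | add : Term → Term → Term
  | mul : Term → Term → Term

/-- Formulas of the two-sorted language of second-order arithmetic.
`mem t i` is `t ∈ X_i` (set variables are de Bruijn indices);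
`ball t φ` / `bex t φ` are the bounded quantifiers ∀x < t.φ / ∃x < t.φ;
`nall`/`nex` quantify over numbers, `sall`/`sex` over sets. -/
inductive Formula : Type
  | eq : Term → Term → Formula
  | lt : Term → Term → Formula
  | mem : Term → ℕ → Formula
  | fneg : Formula → Formula
  | fand : Formula → Formula → Formula
  | forr : Formula → Formula → Formula
  | ball : Term → Formula → Formula
  | bex : Term → Formula → Formula
  | nall : Formula → Formula
  | nex : Formula → Formula
  | sall : Formula → Formula
  | sex : Formula → Formula

/-- A first-order structure in the language 0,1,+,·,<. -/
structure Struct : Type 1 where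
  carrier : Type
  zero : carrier
  one : carrier
  add : carrier → carrier → carrier
  mul : carrier → carrier → carrier
  lt : carrier → carrier → Prop

def Struct.le (S : Struct) (a b : S.carrier) : Prop := S.lt a b ∨ a = b

def Term.val (S : Struct) (v : ℕ → S.carrier) : Term → S.carrier
  | .var i => v i
  | .zero => S.zero
  | .one => S.one
  | .add t u => S.add (t.val S v) (u.val S v)
  | .mul t u => S.mul (t.val S v) (u.val S v)

/-- Prepend a value to a valuation (for de Bruijn binding). -/
def consN {α : Sort*} (a : α) (v : ℕ → α) : ℕ → α
  | 0 => a
  | n + 1 => v n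

/-- Satisfaction in the two-sorted structure (S, 𝒳): `v` is the number
valuation, `V` the set valuation; set quantifiers range over `𝒳`. -/
def Formula.Sat (S : Struct) (𝒳 : Set (Set S.carrier)) :
    Formula → (ℕ → S.carrier) → (ℕ → Set S.carrier) → Prop
  | .eq t u, v, _ => t.val S v = u.val S v
  | .lt t u, v, _ => S.lt (t.val S v) (u.val S v)
  | .mem t i, v, V => t.val S v ∈ V i
  | .fneg φ, v, V => ¬ Formula.Sat S 𝒳 φ v V
  | .fand φ ψ, v, V => Formula.Sat S 𝒳 φ v V ∧ Formula.Sat S 𝒳 ψ v V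
  | .forr φ ψ, v, V => Formula.Sat S 𝒳 φ v V ∨ Formula.Sat S 𝒳 ψ v V
  | .ball t φ, v, V => ∀ a, S.lt a (t.val S v) → Formula.Sat S 𝒳 φ (consN a v) V
  | .bex t φ, v, V => ∃ a, S.lt a (t.val S v) ∧ Formula.Sat S 𝒳 φ (consN a v) V
  | .nall φ, v, V => ∀ a, Formula.Sat S 𝒳 φ (consN a v) V
  | .nex φ, v, V => ∃ a, Formula.Sat S 𝒳 φ (consN a v) V
  | .sall φ, v, V => ∀ A ∈ 𝒳, Formula.Sat S 𝒳 φ v (consN A V)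
  | .sex φ, v, V => ∃ A ∈ 𝒳, Formula.Sat S 𝒳 φ v (consN A V)

/-- First-order ("lightface") formulas: no set variables at all. -/
def Formula.SetFree : Formula → Prop
  | .eq _ _ => True
  | .lt _ _ => True
  | .mem _ _ => False
  | .fneg φ => φ.SetFree
  | .fand φ ψ => φ.SetFree ∧ ψ.SetFree
  | .forr φ ψ => φ.SetFree ∧ ψ.SetFree
  | .ball _ φ => φ.SetFree
  | .bex _ φ => φ.SetFree
  | .nall φ => φ.SetFree
  | .nex φ => φ.SetFree
  | .sall _ => False
  | .sex _ => False

/-- Δ₀ (= Σ⁰₀) formulas: only bounded number quantifiers, no set quantifiers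
(free set variables are allowed). -/
def Formula.IsDelta0 : Formula → Prop
  | .eq _ _ => True
  | .lt _ _ => True
  | .mem _ _ => True
  | .fneg φ => φ.IsDelta0
  | .fand φ ψ => φ.IsDelta0 ∧ ψ.IsDelta0
  | .forr φ ψ => φ.IsDelta0 ∧ ψ.IsDelta0
  | .ball _ φ => φ.IsDelta0
  | .bex _ φ => φ.IsDelta0
  | .nall _ => False
  | .nex _ => False
  | .sall _ => False
  | .sex _ => False

/- The classes Σ_n and Π_n (with free set variables allowed, i.e. Σ⁰_n, Π⁰_n;
lightface classes are obtained by adding `SetFree`). -/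
mutual
  inductive IsSigma : ℕ → Formula → Prop
    | delta0 {n : ℕ} {φ : Formula} : φ.IsDelta0 → IsSigma n φ
    | ex {n : ℕ} {φ : Formula} : IsSigma (n + 1) φ → IsSigma (n + 1) (.nex φ)
    | ofPi {n : ℕ} {φ : Formula} : IsPi n φ → IsSigma (n + 1) φ
  inductive IsPi : ℕ → Formula → Prop
    | delta0 {n : ℕ} {φ : Formula} : φ.IsDelta0 → IsPi n φ
    | all {n : ℕ} {φ : Formula} : IsPi (n + 1) φ → IsPi (n + 1) (.nall φ)
    | ofSigma {n : ℕ} {φ : Formula} : IsSigma n φ → IsPi (n + 1) φ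
end

/-- The basic axioms PA⁻ of a discretely ordered commutative semiring. -/
def PAminus (S : Struct) : Prop :=
  (∀ a b c, S.add (S.add a b) c = S.add a (S.add b c)) ∧
  (∀ a b, S.add a b = S.add b a) ∧
  (∀ a b c, S.mul (S.mul a b) c = S.mul a (S.mul b c)) ∧
  (∀ a b, S.mul a b = S.mul b a) ∧
  (∀ a b c, S.mul a (S.add b c) = S.add (S.mul a b) (S.mul a c)) ∧
  (∀ a, S.add a S.zero = a) ∧
  (∀ a, S.mul a S.zero = S.zero) ∧
  (∀ a, S.mul a S.one = a) ∧
  (∀ a b c, S.lt a b → S.lt b c → S.lt a c) ∧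
  (∀ a, ¬ S.lt a a) ∧
  (∀ a b, S.lt a b ∨ a = b ∨ S.lt b a) ∧
  (∀ a b c, S.lt a b → S.lt (S.add a c) (S.add b c)) ∧
  (∀ a b c, S.lt a b → S.lt S.zero c → S.lt (S.mul a c) (S.mul b c)) ∧
  (∀ a b, S.lt a b → ∃ c, S.add a c = b) ∧
  S.lt S.zero S.one ∧
  (∀ a, S.lt S.zero a → S.le S.one a) ∧
  (∀ a, S.le S.zero a)

/-- Induction scheme for the formulas in class `C` (induction variable is the
de Bruijn variable 0), with set parameters drawn from `P`. -/
def IndScheme (S : Struct) (𝒳 : Set (Set S.carrier)) (C : Formula → Prop)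
    (P : Set (Set S.carrier)) : Prop :=
  ∀ φ, C φ → ∀ (v : ℕ → S.carrier) (V : ℕ → Set S.carrier), (∀ i, V i ∈ P) →
    Formula.Sat S 𝒳 φ (consN S.zero v) V →
    (∀ a, Formula.Sat S 𝒳 φ (consN a v) V →
      Formula.Sat S 𝒳 φ (consN (S.add a S.one) v) V) →
    ∀ a, Formula.Sat S 𝒳 φ (consN a v) V

/-- Collection scheme for the formulas in class `C` (with φ(x,y) having x, y as
de Bruijn variables 0, 1), with set parameters drawn from `P`. -/
def CollScheme (S : Struct) (𝒳 : Set (Set S.carrier)) (C : Formula → Prop)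
    (P : Set (Set S.carrier)) : Prop :=
  ∀ φ, C φ → ∀ (v : ℕ → S.carrier) (V : ℕ → Set S.carrier), (∀ i, V i ∈ P) →
    ∀ a, (∀ x, S.lt x a → ∃ y, Formula.Sat S 𝒳 φ (consN x (consN y v)) V) →
      ∃ b, ∀ x, S.lt x a → ∃ y, S.lt y b ∧ Formula.Sat S 𝒳 φ (consN x (consN y v)) V

/-- IΣ⁰_n : induction for Σ⁰_n formulas with set parameters from 𝒳. -/
def IndB (S : Struct) (𝒳 : Set (Set S.carrier)) (n : ℕ) : Prop :=
  IndScheme S 𝒳 (IsSigma n) 𝒳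

/-- BΣ⁰_n : collection for Σ⁰_n formulas with set parameters from 𝒳. -/
def CollB (S : Struct) (𝒳 : Set (Set S.carrier)) (n : ℕ) : Prop :=
  CollScheme S 𝒳 (IsSigma n) 𝒳

/-- Σ⁰₀ (Δ⁰₀) induction with set parameters from 𝒳. -/
def Delta0IndB (S : Struct) (𝒳 : Set (Set S.carrier)) : Prop :=
  IndScheme S 𝒳 Formula.IsDelta0 𝒳

/-- Lightface IΣ_n scheme. -/
def IndL (S : Struct) (n : ℕ) : Prop :=
  IndScheme S ∅ (fun φ => IsSigma n φ ∧ φ.SetFree) Set.univ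

/-- Lightface BΣ_n scheme. -/
def CollL (S : Struct) (n : ℕ) : Prop :=
  CollScheme S ∅ (fun φ => IsSigma n φ ∧ φ.SetFree) Set.univ

/-- Lightface Δ₀ induction scheme. -/
def Delta0IndL (S : Struct) : Prop :=
  IndScheme S ∅ (fun φ => φ.IsDelta0 ∧ φ.SetFree) Set.univ

/-- Δ⁰₁-comprehension. -/
def Delta1CA (S : Struct) (𝒳 : Set (Set S.carrier)) : Prop :=
  ∀ φ ψ, IsSigma 1 φ → IsPi 1 ψ →
    ∀ (v : ℕ → S.carrier) (V : ℕ → Set S.carrier), (∀ i, V i ∈ 𝒳) →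
      (∀ a, Formula.Sat S 𝒳 φ (consN a v) V ↔ Formula.Sat S 𝒳 ψ (consN a v) V) →
      {a | Formula.Sat S 𝒳 φ (consN a v) V} ∈ 𝒳

/-- `ExpRel S a p` : p = 2^a, rendered as: some set-free Δ₀-definable
(with parameters v) relation is the graph of a function on [0,a] satisfying the
doubling recursion with value p at a.  Over IΔ₀ this is extensionally the graph
of exponentiation. -/
def ExpRel (S : Struct) (a p : S.carrier) : Prop :=
  ∃ (φ : Formula) (v : ℕ → S.carrier), φ.IsDelta0 ∧ φ.SetFree ∧
    (∀ x y y', Formula.Sat S ∅ φ (consN x (consN y v)) (fun _ => ∅) →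
      Formula.Sat S ∅ φ (consN x (consN y' v)) (fun _ => ∅) → y = y') ∧
    (∀ x, S.le x a → ∃ y, Formula.Sat S ∅ φ (consN x (consN y v)) (fun _ => ∅)) ∧
    Formula.Sat S ∅ φ (consN S.zero (consN S.one v)) (fun _ => ∅) ∧
    (∀ x y, S.lt x a → Formula.Sat S ∅ φ (consN x (consN y v)) (fun _ => ∅) →
      Formula.Sat S ∅ φ (consN (S.add x S.one) (consN (S.add y y) v)) (fun _ => ∅)) ∧
    Formula.Sat S ∅ φ (consN a (consN p v)) (fun _ => ∅)

/-- The axiom exp: x ↦ 2^x is total. -/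
def ExpTotal (S : Struct) : Prop := ∀ a, ∃ p, ExpRel S a p

/-- Ackermann membership: the a-th binary digit of s is 1, i.e.
s = q·2^(a+1) + 2^a + r with r < 2^a. -/
def AckMem (S : Struct) (a s : S.carrier) : Prop :=
  ∃ p q r, ExpRel S a p ∧ S.lt r p ∧
    s = S.add (S.add (S.mul q (S.add p p)) p) r

/-- Cuts: subsets containing 0, closed under successor and downwards. -/
def IsCut (S : Struct) (I : Set S.carrier) : Prop :=
  S.zero ∈ I ∧ (∀ a ∈ I, S.add a S.one ∈ I) ∧ (∀ a b, S.lt a b → b ∈ I → a ∈ I)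

def IsProperCut (S : Struct) (I : Set S.carrier) : Prop :=
  IsCut S I ∧ I ≠ Set.univ

/-- Cod(M/I): the subsets of I coded in M via Ackermann coding. -/
def Cod (S : Struct) (I : Set S.carrier) : Set (Set S.carrier) :=
  {B | ∃ s, B = {a | a ∈ I ∧ AckMem S a s}}

/-- Bounded subsets of the model. -/
def Bdd (S : Struct) (X : Set S.carrier) : Prop := ∃ b, ∀ x ∈ X, S.lt x b

/-- Boldface Σ⁰_n-definable sets of (S,𝒳) (number parameters, set parameters from 𝒳). -/
def SigmaDef (S : Struct) (𝒳 : Set (Set S.carrier)) (n : ℕ) (A : Set S.carrier) : Prop :=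
  ∃ (φ : Formula) (v : ℕ → S.carrier) (V : ℕ → Set S.carrier), IsSigma n φ ∧ (∀ i, V i ∈ 𝒳) ∧
    A = {a | Formula.Sat S 𝒳 φ (consN a v) V}

def PiDef (S : Struct) (𝒳 : Set (Set S.carrier)) (n : ℕ) (A : Set S.carrier) : Prop :=
  ∃ (φ : Formula) (v : ℕ → S.carrier) (V : ℕ → Set S.carrier), IsPi n φ ∧ (∀ i, V i ∈ 𝒳) ∧
    A = {a | Formula.Sat S 𝒳 φ (consN a v) V}

def DeltaDef (S : Struct) (𝒳 : Set (Set S.carrier)) (n : ℕ) (A : Set S.carrier) : Prop :=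
  SigmaDef S 𝒳 n A ∧ PiDef S 𝒳 n A

/-- The family Δ⁰_n-Def(M,𝒳). -/
def DeltaFam (S : Struct) (𝒳 : Set (Set S.carrier)) (n : ℕ) : Set (Set S.carrier) :=
  {A | DeltaDef S 𝒳 n A}

/-- Lightface Σ_n-definable sets (number parameters only). -/
def SigmaDefL (S : Struct) (n : ℕ) (A : Set S.carrier) : Prop :=
  ∃ (φ : Formula) (v : ℕ → S.carrier), IsSigma n φ ∧ φ.SetFree ∧
    A = {a | Formula.Sat S ∅ φ (consN a v) (fun _ => ∅)}

def PiDefL (S : Struct) (n : ℕ) (A : Set S.carrier) : Prop :=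
  ∃ (φ : Formula) (v : ℕ → S.carrier), IsPi n φ ∧ φ.SetFree ∧
    A = {a | Formula.Sat S ∅ φ (consN a v) (fun _ => ∅)}

def DeltaDefL (S : Struct) (n : ℕ) (A : Set S.carrier) : Prop :=
  SigmaDefL S n A ∧ PiDefL S n A

/-- The family Δ_n-Def(M) of lightface Δ_n-definable sets. -/
def DeltaFamL (S : Struct) (n : ℕ) : Set (Set S.carrier) :=
  {A | DeltaDefL S n A}

/-- Σ_n-definable with the single set parameter A (all set variables read A). -/
def SigmaDefIn (S : Struct) (A : Set S.carrier) (n : ℕ) (B : Set S.carrier) : Prop :=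
  ∃ (φ : Formula) (v : ℕ → S.carrier), IsSigma n φ ∧
    B = {a | Formula.Sat S ∅ φ (consN a v) (fun _ => A)}

def PiDefIn (S : Struct) (A : Set S.carrier) (n : ℕ) (B : Set S.carrier) : Prop :=
  ∃ (φ : Formula) (v : ℕ → S.carrier), IsPi n φ ∧
    B = {a | Formula.Sat S ∅ φ (consN a v) (fun _ => A)}

/-- B is Δ₁(A). -/
def Delta1In (S : Struct) (A B : Set S.carrier) : Prop :=
  SigmaDefIn S A 1 B ∧ PiDefIn S A 1 B

/-- RCA*₀ : PA⁻ + Δ⁰₁-CA + Σ⁰₀-induction + BΣ⁰₁ + exp. -/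
def RCAstar (S : Struct) (𝒳 : Set (Set S.carrier)) : Prop :=
  PAminus S ∧ Delta0IndB S 𝒳 ∧ CollB S 𝒳 1 ∧ Delta1CA S 𝒳 ∧ ExpTotal S

/-- RCA₀ : RCA*₀ with BΣ⁰₁ strengthened to IΣ⁰₁. -/
def RCA0 (S : Struct) (𝒳 : Set (Set S.carrier)) : Prop :=
  RCAstar S 𝒳 ∧ IndB S 𝒳 1

/-- Lightface first-order theories (over PA⁻, resp. with IΔ₀). -/
def ISigmaT (S : Struct) (n : ℕ) : Prop := PAminus S ∧ IndL S n

def BSigmaT (S : Struct) (n : ℕ) : Prop := PAminus S ∧ Delta0IndL S ∧ CollL S n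

def PAT (S : Struct) : Prop := PAminus S ∧ ∀ n, IndL S n

/-- The theory IB : BΣ₁ + { IΣ_ℓ ⇒ BΣ_{ℓ+1} : ℓ ≥ 1 }. -/
def IBT (S : Struct) : Prop :=
  BSigmaT S 1 ∧ ∀ ℓ, 1 ≤ ℓ → (IndL S ℓ → CollL S (ℓ + 1))

/-- The numeral map ℕ → M. -/
def ofNat (S : Struct) : ℕ → S.carrier
  | 0 => S.zero
  | n + 1 => S.add (ofNat S n) S.one

/-- Cantor pairing (as a relation): z = ((x+y)(x+y+1))/2 + y. -/
def pairRel (S : Struct) (x y z : S.carrier) : Prop :=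
  S.add z z = S.add (S.mul (S.add x y) (S.add (S.add x y) S.one)) (S.add y y)

/-- Coding of nonempty tuples by iterated Cantor pairing (as a relation). -/
def listCode (S : Struct) : List S.carrier → S.carrier → Prop
  | [], _ => False
  | [x], c => c = x
  | x :: y :: xs, c => ∃ w, listCode S (y :: xs) w ∧ pairRel S x w c

/-- Strictly increasing n-tuples (elements of [M]^n). -/
def Incr (S : Struct) {n : ℕ} (x : Fin n → S.carrier) : Prop :=
  ∀ i j : Fin n, i < j → S.lt (x i) (x j)

/-- `F` is (the code of) the colouring `f` of [M]^n with k colours: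
for every increasing tuple x̄ and colour i, the code ⟨x̄, i⟩ lies in F iff f(x̄) = i. -/
def CodesCol (S : Struct) {n k : ℕ} (F : Set S.carrier)
    (f : (Fin n → S.carrier) → Fin k) : Prop :=
  ∀ x : Fin n → S.carrier, Incr S x → ∀ (i : Fin k) (c : S.carrier),
    listCode S (List.ofFn x ++ [ofNat S i.val]) c → (c ∈ F ↔ f x = i)

/-- H is unbounded ("infinite"). -/
def Unbdd (S : Struct) (H : Set S.carrier) : Prop := ∀ a, ∃ b ∈ H, S.lt a b

/-- H is homogeneous for f. -/
def Homog (S : Struct) {n k : ℕ} (f : (Fin n → S.carrier) → Fin k)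
    (H : Set S.carrier) : Prop :=
  ∃ i : Fin k, ∀ x : Fin n → S.carrier, Incr S x → (∀ j, x j ∈ H) → f x = i

/-- (S,𝒳) ⊨ RT^n_k : every k-colouring of [M]^n coded by a set in 𝒳 has an
unbounded homogeneous set in 𝒳. -/
def RT (S : Struct) (𝒳 : Set (Set S.carrier)) (n k : ℕ) : Prop :=
  ∀ (F : Set S.carrier) (f : (Fin n → S.carrier) → Fin k),
    F ∈ 𝒳 → CodesCol S F f → ∃ H ∈ 𝒳, Unbdd S H ∧ Homog S f H

/-- The first-order statement Δ_ℓ-RT^n_k : (M, Δ_ℓ-Def(M)) ⊨ RT^n_k. -/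
def DeltaRT (S : Struct) (ℓ n k : ℕ) : Prop := RT S (DeltaFamL S ℓ) n k

/-- Δ⁰₂-RT²₂ : (M, Δ⁰₂-Def(M,𝒳)) ⊨ RT²₂. -/
def D2RT (S : Struct) (𝒳 : Set (Set S.carrier)) : Prop := RT S (DeltaFam S 𝒳 2) 2 2

/-- (I, Cod(M/I)) ⊨ RT^n_k, where colourings of [I]^n and subsets of I are
those coded in M (via Cantor pairing and Ackermann coding). -/
def RTcut (S : Struct) (I : Set S.carrier) (n k : ℕ) : Prop :=
  ∀ f : (Fin n → S.carrier) → Fin k,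
    (∃ s, ∀ x : Fin n → S.carrier, Incr S x → (∀ j, x j ∈ I) →
      ∀ (i : Fin k) (c : S.carrier), listCode S (List.ofFn x ++ [ofNat S i.val]) c →
        (AckMem S c s ↔ f x = i)) →
    ∃ H ∈ Cod S I, (∀ a ∈ I, ∃ b ∈ H, S.lt a b) ∧ Homog S f H

/-- GPHP(Σ_n(X)) : the generalized pigeonhole principle for Σ_n formulas with
set parameter X.  φ(x,y,z) has x,y,z as de Bruijn variables 0,1,2 (further
number parameters allowed). -/
def GPHPparam (S : Struct) (X : Set S.carrier) (n : ℕ) : Prop :=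
  ∀ φ, IsSigma n φ → ∀ (v : ℕ → S.carrier) (a : S.carrier), ∃ b, ¬ ∃ c,
    (∀ x, S.lt x b → ∃ y, S.lt y a ∧
      Formula.Sat S ∅ φ (consN x (consN y (consN c v))) (fun _ => X)) ∧
    (∀ y x x', S.lt y a → S.lt x b → S.lt x' b →
      Formula.Sat S ∅ φ (consN x (consN y (consN c v))) (fun _ => X) →
      Formula.Sat S ∅ φ (consN x' (consN y (consN c v))) (fun _ => X) → x = x')

/-- Lightface GPHP(Σ_n). -/
def GPHPL (S : Struct) (n : ℕ) : Prop :=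
  ∀ φ, IsSigma n φ → φ.SetFree → ∀ (v : ℕ → S.carrier) (a : S.carrier), ∃ b, ¬ ∃ c,
    (∀ x, S.lt x b → ∃ y, S.lt y a ∧
      Formula.Sat S ∅ φ (consN x (consN y (consN c v))) (fun _ => ∅)) ∧
    (∀ y x x', S.lt y a → S.lt x b → S.lt x' b →
      Formula.Sat S ∅ φ (consN x (consN y (consN c v))) (fun _ => ∅) →
      Formula.Sat S ∅ φ (consN x' (consN y (consN c v))) (fun _ => ∅) → x = x')

/-- BΣ_n(X) : collection for Σ_n formulas with set parameter X. -/
def CollParam (S : Struct) (X : Set S.carrier) (n : ℕ) : Prop :=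
  ∀ φ, IsSigma n φ → ∀ (v : ℕ → S.carrier) (a : S.carrier),
    (∀ x, S.lt x a → ∃ y, Formula.Sat S ∅ φ (consN x (consN y v)) (fun _ => X)) →
    ∃ b, ∀ x, S.lt x a → ∃ y, S.lt y b ∧
      Formula.Sat S ∅ φ (consN x (consN y v)) (fun _ => X)

/-- The cardinality scheme CΣ_n : no Σ_n formula defines a total injection
with bounded range. -/
def CSigmaL (S : Struct) (n : ℕ) : Prop :=
  ∀ φ, IsSigma n φ → φ.SetFree → ∀ (v : ℕ → S.carrier) (a : S.carrier),
    ¬ ((∀ x, ∃ y, S.lt y a ∧ Formula.Sat S ∅ φ (consN x (consN y v)) (fun _ => ∅)) ∧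
       (∀ x y y', Formula.Sat S ∅ φ (consN x (consN y v)) (fun _ => ∅) →
         Formula.Sat S ∅ φ (consN x (consN y' v)) (fun _ => ∅) → y = y') ∧
       (∀ x x' y, Formula.Sat S ∅ φ (consN x (consN y v)) (fun _ => ∅) →
         Formula.Sat S ∅ φ (consN x' (consN y v)) (fun _ => ∅) → x = x'))

/-- Truth of a first-order formula in S (free variables read universally). -/
def SatFO (S : Struct) (ψ : Formula) : Prop :=
  ∀ v : ℕ → S.carrier, Formula.Sat S ∅ ψ v (fun _ => ∅)

/-- The first-order consequences of a (semantically presented) first-order theory. -/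
def Csq (T : Struct → Prop) : Set Formula :=
  {ψ | ψ.SetFree ∧ ∀ S : Struct, T S → SatFO S ψ}

/-- The first-order consequences of RCA*₀ + RT^n_k. -/
def CsqRT (n k : ℕ) : Set Formula :=
  {ψ | ψ.SetFree ∧ ∀ (S : Struct) (𝒳 : Set (Set S.carrier)),
    RCAstar S 𝒳 → RT S 𝒳 n k → SatFO S ψ}

/-- Π_m sentences (lightface). -/
def PiSent (m : ℕ) : Set Formula := {ψ | IsPi m ψ ∧ ψ.SetFree}

/-- The theory R^n = { (BΣ_{ℓ+1} ∧ exp) ∨ ⋁_{j=1}^{ℓ} Δ_j-RT^n_2 : ℓ ∈ ω }. -/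
def Rn (S : Struct) (n : ℕ) : Prop :=
  ∀ ℓ : ℕ, (BSigmaT S (ℓ + 1) ∧ ExpTotal S) ∨ ∃ j, 1 ≤ j ∧ j ≤ ℓ ∧ DeltaRT S j n 2

/-- "0^(ℓ) ∈ 𝒳", rendered as: 𝒳 contains a Σ_ℓ-definable set A such that every
lightface Σ_ℓ-definable set is Δ₁(A) (this pins A down as a Σ_ℓ-complete set,
which is exactly the role of 0^(ℓ) = {e : Sat_ℓ(e,e)}). -/
def JumpIn (S : Struct) (𝒳 : Set (Set S.carrier)) (ℓ : ℕ) : Prop :=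
  ∃ A ∈ 𝒳, SigmaDefL S ℓ A ∧ ∀ B : Set S.carrier, SigmaDefL S ℓ B → Delta1In S A B

/-!
`RT^n_{k+1} → RT^n_k`: a `k`-colouring is a `(k+1)`-colouring once the codes of tuples of colour
`k` are removed from its code, which is a Δ₀ operation.

`RT^n_k → RT^n_{k+1}`: merging the last colour of `f` into colour `0` and applying `RT^n_k` gives
an unbounded `H₁` on which `f` takes only two values. Without Σ₁-induction `H₁` need not have an
enumeration, so instead `RT^n_2` is applied to the colouring of `x` by whether `f` has the last
colour at `ν x`, the tuple of the least elements of `H₁` above the entries of `x`. If `H₂` is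
homogeneous for it, then so is `ν[H₂] ⊆ H₁` for `f`: every increasing tuple of `ν[H₂]` is `ν x` for
an increasing tuple `x` of `H₂`. All colourings used have Δ⁰₁ codes: the code of `(ν x, k)` is not
bounded by that of `(x, i)`, but it is a Δ₀-definable function of it, so the preimage of the given
code under it is both Σ⁰₁ and Π⁰₁.
-/

@[simp] theorem consN_zero {α : Sort*} (a : α) (v : ℕ → α) : consN a v 0 = a := rfl

@[simp] theorem consN_succ {α : Sort*} (a : α) (v : ℕ → α) (i : ℕ) : consN a v (i + 1) = v i :=
  rfl

namespace PAminus

variable {S : Struct} (h : PAminus S)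
include h

theorem lt_trans {a b c : S.carrier} : S.lt a b → S.lt b c → S.lt a c :=
  h.2.2.2.2.2.2.2.2.1 a b c

theorem lt_irrefl (a : S.carrier) : ¬ S.lt a a := h.2.2.2.2.2.2.2.2.2.1 a

theorem lt_trichotomy (a b : S.carrier) : S.lt a b ∨ a = b ∨ S.lt b a :=
  h.2.2.2.2.2.2.2.2.2.2.1 a b

theorem one_le_of_pos {a : S.carrier} : S.lt S.zero a → S.le S.one a :=
  h.2.2.2.2.2.2.2.2.2.2.2.2.2.2.2.1 a

abbrev commSemiring : CommSemiring S.carrier :=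
  letI : Zero S.carrier := ⟨S.zero⟩
  letI : One S.carrier := ⟨S.one⟩
  letI : Add S.carrier := ⟨S.add⟩
  letI : Mul S.carrier := ⟨S.mul⟩
  { add_assoc := h.1
    add_comm := h.2.1
    zero_add a := (h.2.1 _ _).trans (h.2.2.2.2.2.1 a)
    add_zero := h.2.2.2.2.2.1
    mul_assoc := h.2.2.1
    mul_comm := h.2.2.2.1
    one_mul a := (h.2.2.2.1 _ _).trans (h.2.2.2.2.2.2.2.1 a)
    mul_one := h.2.2.2.2.2.2.2.1
    left_distrib := h.2.2.2.2.1
    right_distrib a b c := by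
      change S.mul (S.add a b) c = S.add (S.mul a c) (S.mul b c)
      rw [h.2.2.2.1, h.2.2.2.2.1, h.2.2.2.1 c, h.2.2.2.1 c]
    zero_mul a := (h.2.2.2.1 _ _).trans (h.2.2.2.2.2.2.1 a)
    mul_zero := h.2.2.2.2.2.2.1
    nsmul := nsmulRec
    npow := npowRec }

noncomputable abbrev linearOrder : LinearOrder S.carrier where
  le := S.le
  lt := S.lt
  le_refl _ := Or.inr rfl
  le_trans a b c hab hbc := by
    rcases hab with hab | rfl
    · rcases hbc with hbc | rfl
      exacts [Or.inl (h.lt_trans hab hbc), Or.inl hab]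
    · exact hbc
  le_antisymm a b hab hba := by
    rcases hab with hab | rfl
    · rcases hba with hba | rfl
      exacts [(h.lt_irrefl a (h.lt_trans hab hba)).elim, rfl]
    · rfl
  le_total a b := by
    rcases h.lt_trichotomy a b with hab | rfl | hba
    exacts [Or.inl (Or.inl hab), Or.inl (Or.inr rfl), Or.inr (Or.inl hba)]
  lt_iff_le_not_ge a b := by
    refine ⟨fun hab => ⟨Or.inl hab, ?_⟩, fun ⟨hab, hba⟩ => hab.resolve_right ?_⟩
    · rintro (hba | rfl)
      exacts [h.lt_irrefl a (h.lt_trans hab hba), h.lt_irrefl _ hab]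
    · rintro rfl
      exact hba (Or.inr rfl)
  toDecidableLE := Classical.decRel _

theorem isStrictOrderedRing :
    @IsStrictOrderedRing S.carrier h.commSemiring.toSemiring h.linearOrder.toPartialOrder := by
  let := h.commSemiring; let := h.linearOrder
  have add_lt_add_right : ∀ a b c : S.carrier, a < b → a + c < b + c := h.2.2.2.2.2.2.2.2.2.2.2.1
  have mul_lt_mul_right : ∀ a b c : S.carrier, a < b → 0 < c → a * c < b * c :=
    h.2.2.2.2.2.2.2.2.2.2.2.2.1
  have zero_lt_one : (0 : S.carrier) < 1 := h.2.2.2.2.2.2.2.2.2.2.2.2.2.2.1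
  have add_le_add_right (a b c : S.carrier) (hab : a ≤ b) : a + c ≤ b + c :=
    hab.lt_or_eq.elim (fun hab => (add_lt_add_right a b c hab).le) fun hab => hab ▸ le_rfl
  exact
    { add_le_add_left a b hab c := add_le_add_right a b c hab
      le_of_add_le_add_left a b c hbc := le_of_not_gt fun hcb => hbc.not_gt <| by
        simpa only [add_comm a] using add_lt_add_right c b a hcb
      zero_le_one := Or.inl zero_lt_one
      exists_pair_ne := ⟨0, 1, ne_of_lt zero_lt_one⟩
      mul_lt_mul_of_pos_left a ha b c hbc := by
        simpa only [mul_comm a] using mul_lt_mul_right b c a hbc ha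
      mul_lt_mul_of_pos_right a ha b c hbc := mul_lt_mul_right b c a hbc ha }

theorem canonicallyOrderedAdd :
    @CanonicallyOrderedAdd S.carrier h.commSemiring.toAdd h.linearOrder.toLE := by
  let := h.commSemiring; let := h.linearOrder
  have := h.isStrictOrderedRing
  have exists_add_of_lt : ∀ a b : S.carrier, a < b → ∃ c, a + c = b := h.2.2.2.2.2.2.2.2.2.2.2.2.2.1
  have zero_le : ∀ a : S.carrier, 0 ≤ a := h.2.2.2.2.2.2.2.2.2.2.2.2.2.2.2.2
  exact
    { exists_add_of_le {a b} hab := hab.lt_or_eq.elim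
        (fun hab => (exists_add_of_lt a b hab).imp fun _ hc => hc.symm)
        (fun hab => ⟨0, by rw [hab, add_zero]⟩)
      le_add_self a b := le_add_of_nonneg_left (zero_le b)
      le_self_add a b := le_add_of_nonneg_right (zero_le b) }

theorem add_one_le_of_lt {a b : S.carrier} (hab : S.lt a b) : S.le (S.add a S.one) b := by
  let := h.commSemiring; let := h.linearOrder
  have := h.isStrictOrderedRing; have := h.canonicallyOrderedAdd
  obtain ⟨c, rfl⟩ := exists_add_of_le (show a ≤ b from Or.inl hab)
  have hc : 0 < c := pos_of_ne_zero fun hc => h.lt_irrefl a (by simpa [hc] using hab)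
  show a + 1 ≤ a + c
  gcongr
  exact h.one_le_of_pos hc

theorem lt_add_one_iff {a b : S.carrier} : S.lt a (S.add b S.one) ↔ S.le a b := by
  let := h.commSemiring; let := h.linearOrder
  have := h.isStrictOrderedRing
  show a < b + 1 ↔ a ≤ b
  refine ⟨fun hab => le_of_not_gt fun hba => ?_, fun hab => hab.trans_lt (lt_add_one b)⟩
  exact (show b + 1 ≤ a from h.add_one_le_of_lt hba).not_gt hab

theorem lt_add_one (a : S.carrier) : S.lt a (S.add a S.one) :=
  h.lt_add_one_iff.2 (Or.inr rfl)

theorem le_of_not_lt {a b : S.carrier} : ¬ S.lt a b → S.le b a :=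
  @le_of_not_gt _ h.linearOrder _ _

theorem lt_of_lt_of_le {a b c : S.carrier} : S.lt a b → S.le b c → S.lt a c :=
  @_root_.lt_of_lt_of_le _ h.linearOrder.toPreorder a b c

theorem lt_of_le_of_lt {a b c : S.carrier} : S.le a b → S.lt b c → S.lt a c :=
  @_root_.lt_of_le_of_lt _ h.linearOrder.toPreorder a b c

theorem not_lt_zero (a : S.carrier) : ¬ S.lt a S.zero := by
  let := h.commSemiring; let := h.linearOrder
  have := h.canonicallyOrderedAdd
  exact (zero_le : 0 ≤ a).not_gt

theorem ofNat_injective : Function.Injective (ofNat S) := by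
  let := h.linearOrder
  exact (strictMono_nat_of_lt_succ fun i => h.lt_add_one (ofNat S i)).injective

theorem pairRel_unique {x y z z' : S.carrier} (hz : pairRel S x y z) (hz' : pairRel S x y z') :
    z = z' := by
  let := h.commSemiring; let := h.linearOrder
  have := h.isStrictOrderedRing
  have : z + z = z' + z' := hz.trans hz'.symm
  rwa [← two_mul, ← two_mul, mul_left_cancel_iff_of_pos two_pos] at this

theorem pairRel_le {x y z : S.carrier} (hz : pairRel S x y z) : S.le x z ∧ S.le y z := by
  let := h.commSemiring; let := h.linearOrder
  have := h.isStrictOrderedRing; have := h.canonicallyOrderedAdd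
  change z + z = (x + y) * (x + y + 1) + (y + y) at hz
  show x ≤ z ∧ y ≤ z
  have half {a b : S.carrier} (hab : a + a ≤ b + b) : a ≤ b :=
    le_of_not_gt fun hba => hab.not_gt (add_lt_add hba hba)
  have hs : x + y ≤ (x + y) * (x + y) := by
    rcases (zero_le : 0 ≤ x + y).lt_or_eq with hs | hs
    · exact le_mul_of_one_le_left zero_le (h.one_le_of_pos hs)
    · rw [← hs, zero_mul]
  refine ⟨(le_self_add : x ≤ x + y).trans (half ?_), half ?_⟩
  · rw [hz, mul_add_one]
    exact le_add_right (add_le_add_left hs _)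
  · rw [hz]
    exact le_add_self

theorem pairRel_injective {x y a b z : S.carrier} (h₁ : pairRel S x y z)
    (h₂ : pairRel S a b z) : x = a ∧ y = b := by
  let := h.commSemiring; let := h.linearOrder
  have := h.isStrictOrderedRing; have := h.canonicallyOrderedAdd
  change z + z = (x + y) * (x + y + 1) + (y + y) at h₁
  change z + z = (a + b) * (a + b + 1) + (b + b) at h₂
  have sum_not_lt {x y a b : S.carrier} (h₁ : z + z = (x + y) * (x + y + 1) + (y + y))
      (h₂ : z + z = (a + b) * (a + b + 1) + (b + b)) : ¬ x + y < a + b := fun hlt => by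
    have hst : x + y + 1 ≤ a + b := h.add_one_le_of_lt hlt
    refine (calc z + z = (x + y) * (x + y + 1) + (y + y) := h₁
      _ ≤ (x + y) * (x + y + 1) + ((x + y) + (x + y)) := by gcongr <;> exact le_add_self
      _ < (x + y) * (x + y + 1) + ((x + y) + (x + y)) + 2 := lt_add_of_pos_right _ two_pos
      _ = (x + y + 1) * (x + y + 1 + 1) := by ring
      _ ≤ (a + b) * (a + b + 1) := by gcongr
      _ ≤ z + z := h₂ ▸ le_self_add).false
  have hs : x + y = a + b :=
    le_antisymm (le_of_not_gt (sum_not_lt h₂ h₁)) (le_of_not_gt (sum_not_lt h₁ h₂))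
  have hy : y = b := by
    rw [hs] at h₁
    have := add_left_cancel (h₁.symm.trans h₂)
    rwa [← two_mul, ← two_mul, mul_left_cancel_iff_of_pos two_pos] at this
  exact ⟨add_right_cancel (hy ▸ hs), hy⟩

end PAminus

theorem Delta0IndB.induction {S : Struct} {𝒳 : Set (Set S.carrier)} (hInd : Delta0IndB S 𝒳)
    {φ : Formula} (hφ : φ.IsDelta0) {v : ℕ → S.carrier} {V : ℕ → Set S.carrier}
    (hV : ∀ i, V i ∈ 𝒳) {P : S.carrier → Prop} (hP : ∀ a, φ.Sat S 𝒳 (consN a v) V ↔ P a)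
    (zero : P S.zero) (succ : ∀ a, P a → P (S.add a S.one)) (a : S.carrier) : P a :=
  (hP a).1 <| hInd φ hφ v V hV ((hP _).2 zero) (fun b hb => (hP _).2 (succ b ((hP b).1 hb))) a

namespace PAminus

variable {S : Struct} (h : PAminus S) {𝒳 : Set (Set S.carrier)}
include h

theorem exists_pairRel (hInd : Delta0IndB S 𝒳) (h𝒳 : 𝒳.Nonempty) (x y : S.carrier) :
    ∃ z, pairRel S x y z := by
  let := h.commSemiring; let := h.linearOrder
  have := h.isStrictOrderedRing; have := h.canonicallyOrderedAdd
  obtain ⟨X, hX⟩ := h𝒳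
  have even : ∀ s : S.carrier, ∃ u, u < s * (s + 1) + 1 ∧ u + u = s * (s + 1) :=
    hInd.induction (φ := .bex (.add (.mul (.var 0) (.add (.var 0) .one)) .one)
        (.eq (.add (.var 0) (.var 0)) (.mul (.var 1) (.add (.var 1) .one))))
      trivial (v := fun _ => S.zero) (fun _ => hX) (fun _ => Iff.rfl)
      (⟨0, by simp⟩ : ∃ u : S.carrier, u < 0 * (0 + 1) + 1 ∧ u + u = 0 * (0 + 1))
      fun s ⟨u, _, hu⟩ => by
        have hu' : (u + (s + 1)) + (u + (s + 1)) = (s + 1) * (s + 1 + 1) := by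
          rw [add_add_add_comm, hu]; ring
        exact ⟨u + (s + 1), (hu' ▸ le_self_add).trans_lt (_root_.lt_add_one _), hu'⟩
  obtain ⟨u, -, hu⟩ := even (x + y)
  refine ⟨u + y, ?_⟩
  show (u + y) + (u + y) = (x + y) * (x + y + 1) + (y + y)
  rw [← hu]; ring

end PAminus

/-- `y` is the least element of `H` that is `≥ u`, with minimality bounded by `y` so that the
relation is Δ₀ in `H`. -/
def IsNext (S : Struct) (H : Set S.carrier) (u y : S.carrier) : Prop :=
  y ∈ H ∧ ¬ S.lt y u ∧ ∀ z, S.lt z y → S.lt z u ∨ z ∉ H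

namespace IsNext

variable {S : Struct} (h : PAminus S) {H : Set S.carrier} {u y : S.carrier}
include h

theorem le (hy : IsNext S H u y) : S.le u y := h.le_of_not_lt hy.2.1

theorem le_of_mem (hy : IsNext S H u y) {z : S.carrier} (hz : z ∈ H) (huz : S.le u z) :
    S.le y z := h.le_of_not_lt fun hzy => (hy.2.2 z hzy).elim
  (fun hzu => h.lt_irrefl u (h.lt_of_le_of_lt huz hzu)) (· hz)

theorem unique {y' : S.carrier} (hy : IsNext S H u y) (hy' : IsNext S H u y') : y = y' := by
  let := h.linearOrder
  exact le_antisymm (hy.le_of_mem h hy'.1 (hy'.le h)) (hy'.le_of_mem h hy.1 (hy.le h))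

end IsNext

theorem Incr.of_isNext {S : Struct} (h : PAminus S) {H : Set S.carrier} {n : ℕ}
    {x y : Fin n → S.carrier} (hxy : ∀ j, IsNext S H (x j) (y j)) (hy : Incr S y) : Incr S x :=
  fun i j hij => h.lt_of_le_of_lt ((hxy i).le h) <| by_contra fun hji => h.lt_irrefl _ <|
    h.lt_of_lt_of_le (hy i j hij) ((hxy j).le_of_mem h (hxy i).1 (h.le_of_not_lt hji))

theorem PAminus.exists_isNext {S : Struct} (h : PAminus S) {𝒳 : Set (Set S.carrier)}
    (hInd : Delta0IndB S 𝒳) {H : Set S.carrier} (hH : H ∈ 𝒳) (hU : Unbdd S H) (u : S.carrier) :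
    ∃ y, IsNext S H u y := by
  by_contra! hne
  have below : ∀ b z, S.lt z b → S.lt z u ∨ z ∉ H :=
    hInd.induction (φ := .ball (.var 0) (.forr (.lt (.var 0) (.var 2)) (.fneg (.mem (.var 0) 0))))
      ⟨trivial, trivial⟩ (v := fun _ => u) (fun _ => hH) (fun _ => Iff.rfl)
      (fun z hz => (h.not_lt_zero z hz).elim)
      fun b hb z hz => by
        rcases h.lt_add_one_iff.1 hz with hzb | rfl
        · exact hb z hzb
        · by_cases hzu : S.lt z u
          exacts [Or.inl hzu, Or.inr fun hzH => hne z ⟨hzH, hzu, hb⟩]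
  obtain ⟨b, hbH, hub⟩ := hU u
  exact h.lt_irrefl u (h.lt_trans hub
    ((below _ b (h.lt_add_one b)).resolve_right (not_not.2 hbH)))

theorem Unbdd.exists_incr {S : Struct} (h : PAminus S) {H : Set S.carrier} (hH : Unbdd S H)
    (n : ℕ) : ∃ x : Fin n → S.carrier, Incr S x ∧ ∀ j, x j ∈ H := by
  let := h.linearOrder
  choose g hgH hg using hH
  have mono : StrictMono fun k : ℕ => g^[k] S.zero := strictMono_nat_of_lt_succ fun k => by
    rw [Function.iterate_succ_apply']; exact hg _
  refine ⟨fun j => g^[j + 1] S.zero, fun i j hij => mono (by simpa using hij), fun j => ?_⟩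
  simp only [Function.iterate_succ_apply', hgH]

theorem listCode_cons {S : Struct} {a c : S.carrier} {l : List S.carrier} (hl : l ≠ []) :
    listCode S (a :: l) c ↔ ∃ w, listCode S l w ∧ pairRel S a w c := by
  obtain ⟨b, l, rfl⟩ := List.exists_cons_of_ne_nil hl
  rfl

/-- `c` codes the tuple `x` followed by `e`: `c = ⟨x 0, ⟨x 1, … ⟨x (n - 1), e⟩ … ⟩⟩`. -/
def TupleCode (S : Struct) {n : ℕ} (x : Fin n → S.carrier) (e c : S.carrier) : Prop :=
  listCode S (List.ofFn x ++ [e]) c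

namespace TupleCode

variable {S : Struct} {n : ℕ}

theorem zero_iff {x : Fin 0 → S.carrier} {e c : S.carrier} : TupleCode S x e c ↔ c = e := by
  simp [TupleCode, listCode]

theorem cons_iff {a e c : S.carrier} {x : Fin n → S.carrier} :
    TupleCode S (Fin.cons a x) e c ↔ ∃ w, TupleCode S x e w ∧ pairRel S a w c := by
  rw [TupleCode, List.ofFn_cons, List.cons_append, listCode_cons (by simp)]
  rfl

variable (h : PAminus S)
include h

theorem unique {x : Fin n → S.carrier} {e c c' : S.carrier} (hc : TupleCode S x e c)
    (hc' : TupleCode S x e c') : c = c' := by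
  induction n generalizing c c' with
  | zero => exact (zero_iff.1 hc).trans (zero_iff.1 hc').symm
  | succ n ih =>
    cases x using Fin.consCases with | cons a x =>
    obtain ⟨w, hw, hc⟩ := cons_iff.1 hc
    obtain ⟨w', hw', hc'⟩ := cons_iff.1 hc'
    obtain rfl := ih hw hw'
    exact h.pairRel_unique hc hc'

theorem injective {x x' : Fin n → S.carrier} {e e' c : S.carrier} (hc : TupleCode S x e c)
    (hc' : TupleCode S x' e' c) : x = x' ∧ e = e' := by
  induction n generalizing c with
  | zero => exact ⟨Subsingleton.elim _ _, (zero_iff.1 hc).symm.trans (zero_iff.1 hc')⟩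
  | succ n ih =>
    cases x using Fin.consCases with | cons a x =>
    cases x' using Fin.consCases with | cons a' x' =>
    obtain ⟨w, hw, hc⟩ := cons_iff.1 hc
    obtain ⟨w', hw', hc'⟩ := cons_iff.1 hc'
    obtain ⟨rfl, rfl⟩ := h.pairRel_injective hc hc'
    obtain ⟨rfl, rfl⟩ := ih hw hw'
    exact ⟨rfl, rfl⟩

theorem exists_map_iff {R : S.carrier → S.carrier → Prop} (hR : ∀ a b b', R a b → R a b' → b = b')
    {x y : Fin n → S.carrier} (hxy : ∀ j, R (x j) (y j)) {e c c' : S.carrier}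
    (hc : TupleCode S y e c) : (∃ y', (∀ j, R (x j) (y' j)) ∧ TupleCode S y' e c') ↔ c' = c := by
  refine ⟨fun ⟨y', hxy', hc'⟩ => ?_, fun hc' => ⟨y, hxy, hc' ▸ hc⟩⟩
  obtain rfl : y' = y := funext fun j => hR _ _ _ (hxy' j) (hxy j)
  exact hc'.unique h hc

end TupleCode

theorem PAminus.exists_tupleCode {S : Struct} (h : PAminus S) {𝒳 : Set (Set S.carrier)}
    (hInd : Delta0IndB S 𝒳) (h𝒳 : 𝒳.Nonempty) {n : ℕ} (x : Fin n → S.carrier) (e : S.carrier) :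
    ∃ c, TupleCode S x e c := by
  induction n with
  | zero => exact ⟨e, TupleCode.zero_iff.2 rfl⟩
  | succ n ih =>
    cases x using Fin.consCases with | cons a x =>
    obtain ⟨w, hw⟩ := ih x
    obtain ⟨c, hc⟩ := h.exists_pairRel hInd h𝒳 a w
    exact ⟨c, TupleCode.cons_iff.2 ⟨w, hw, hc⟩⟩

def CodeMap (S : Struct) (R : S.carrier → S.carrier → Prop) (n r r' : ℕ) (c c' : S.carrier) :
    Prop :=
  ∃ x y : Fin n → S.carrier,
    (∀ j, R (x j) (y j)) ∧ TupleCode S x (ofNat S r) c ∧ TupleCode S y (ofNat S r') c'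

namespace CodeMap

variable {S : Struct} {R : S.carrier → S.carrier → Prop} {n r r' : ℕ} {c c' : S.carrier}

theorem zero_iff : CodeMap S R 0 r r' c c' ↔ c = ofNat S r ∧ c' = ofNat S r' := by
  simp [CodeMap, TupleCode.zero_iff]

theorem succ_iff : CodeMap S R (n + 1) r r' c c' ↔
    ∃ a w b w', pairRel S a w c ∧ pairRel S b w' c' ∧ R a b ∧ CodeMap S R n r r' w w' := by
  simp only [CodeMap, Fin.exists_fin_succ_pi, Fin.forall_fin_succ, Fin.cons_zero, Fin.cons_succ,
    TupleCode.cons_iff]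
  constructor
  · rintro ⟨a, x, b, y, ⟨hab, hxy⟩, ⟨w, hx, hc⟩, ⟨w', hy, hc'⟩⟩
    exact ⟨a, w, b, w', hc, hc', hab, x, y, hxy, hx, hy⟩
  · rintro ⟨a, w, b, w', hc, hc', hab, x, y, hxy, hx, hy⟩
    exact ⟨a, x, b, y, ⟨hab, hxy⟩, ⟨w, hx, hc⟩, ⟨w', hy, hc'⟩⟩

variable (h : PAminus S)
include h

theorem iff_of_tupleCode {x : Fin n → S.carrier} {i : ℕ} (hc : TupleCode S x (ofNat S i) c) :
    CodeMap S R n r r' c c' ↔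
      i = r ∧ ∃ y : Fin n → S.carrier, (∀ j, R (x j) (y j)) ∧ TupleCode S y (ofNat S r') c' := by
  constructor
  · rintro ⟨x', y, hR, hx', hy⟩
    obtain ⟨rfl, hr⟩ := hx'.injective h hc
    exact ⟨h.ofNat_injective hr.symm, y, hR, hy⟩
  · rintro ⟨rfl, y, hR, hy⟩
    exact ⟨x, y, hR, hc, hy⟩

theorem unique (hR : ∀ a b b', R a b → R a b' → b = b') {c₁ c₂ : S.carrier}
    (h₁ : CodeMap S R n r r' c c₁) (h₂ : CodeMap S R n r r' c c₂) : c₁ = c₂ := by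
  obtain ⟨x, y, hxy, hx, hy⟩ := h₁
  obtain ⟨x', y', hxy', hx', hy'⟩ := h₂
  obtain ⟨rfl, -⟩ := hx.injective h hx'
  exact ((TupleCode.exists_map_iff h hR hxy hy).1 ⟨y', hxy', hy'⟩).symm

theorem exists_iff {𝒳 : Set (Set S.carrier)} (hInd : Delta0IndB S 𝒳) (h𝒳 : 𝒳.Nonempty)
    (hR : ∀ a, ∃ b, R a b) : (∃ c', CodeMap S R n r r' c c') ↔ CodeMap S (· = ·) n r r c c := by
  constructor
  · rintro ⟨c', x, -, -, hx, -⟩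
    exact ⟨x, x, fun _ => rfl, hx, hx⟩
  · rintro ⟨x, -, -, hx, -⟩
    choose g hg using hR
    obtain ⟨c', hc'⟩ := h.exists_tupleCode hInd h𝒳 (g ∘ x) (ofNat S r')
    exact ⟨c', x, g ∘ x, fun j => hg (x j), hx, hc'⟩

end CodeMap

def numeral : ℕ → Term
  | 0 => .zero
  | r + 1 => .add (numeral r) .one

@[simp] theorem numeral_val {S : Struct} (v : ℕ → S.carrier) (r : ℕ) :
    (numeral r).val S v = ofNat S r := by
  induction r with
  | zero => rfl
  | succ r ih => simp only [numeral, Term.val, ih]; rfl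

section Definability

variable {S : Struct} (𝒳 : Set (Set S.carrier)) (V : ℕ → Set S.carrier)

/-- Formulas are parametrised by the de Bruijn indices of their free variables, so that they can
be placed under quantifiers without a substitution operation. -/
def Delta0Defines₁ (φ : ℕ → Formula) (P : S.carrier → Prop) : Prop :=
  ∀ i, (φ i).IsDelta0 ∧ ∀ v, (φ i).Sat S 𝒳 v V ↔ P (v i)

def Delta0Defines₂ (φ : ℕ → ℕ → Formula) (R : S.carrier → S.carrier → Prop) : Prop :=
  ∀ i j, (φ i j).IsDelta0 ∧ ∀ v, (φ i j).Sat S 𝒳 v V ↔ R (v i) (v j)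

variable {𝒳 V}

theorem Delta0Defines₁.not {φ : ℕ → Formula} {P : S.carrier → Prop}
    (hφ : Delta0Defines₁ 𝒳 V φ P) : Delta0Defines₁ 𝒳 V (fun i => (φ i).fneg) (¬ P ·) :=
  fun i => ⟨(hφ i).1, fun v => not_congr ((hφ i).2 v)⟩

theorem Delta0Defines₂.diag {φ : ℕ → ℕ → Formula} {R : S.carrier → S.carrier → Prop}
    (hφ : Delta0Defines₂ 𝒳 V φ R) : Delta0Defines₁ 𝒳 V (fun i => φ i i) (fun a => R a a) :=
  fun i => hφ i i

def memF (s i : ℕ) : Formula := .mem (.var i) s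

theorem delta0Defines_memF (s : ℕ) : Delta0Defines₁ 𝒳 V (memF s) (· ∈ V s) :=
  fun _ => ⟨trivial, fun _ => Iff.rfl⟩

def eqF (i j : ℕ) : Formula := .eq (.var i) (.var j)

theorem delta0Defines_eqF : Delta0Defines₂ 𝒳 V eqF (· = ·) :=
  fun _ _ => ⟨trivial, fun _ => Iff.rfl⟩

def nxtF (s i j : ℕ) : Formula :=
  (memF s j).fand <| (Formula.lt (.var j) (.var i)).fneg.fand <|
    .ball (.var j) ((Formula.lt (.var 0) (.var (i + 1))).forr (memF s 0).fneg)

theorem delta0Defines_nxtF (s : ℕ) : Delta0Defines₂ 𝒳 V (nxtF s) (IsNext S (V s)) :=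
  fun _ _ => ⟨⟨trivial, trivial, trivial, trivial⟩, fun _ => Iff.rfl⟩

def pairF (i j l : ℕ) : Formula :=
  .eq (.add (.var l) (.var l))
    (.add (.mul (.add (.var i) (.var j)) (.add (.add (.var i) (.var j)) .one))
      (.add (.var j) (.var j)))

@[simp] theorem sat_pairF {v : ℕ → S.carrier} {i j l : ℕ} :
    (pairF i j l).Sat S 𝒳 v V ↔ pairRel S (v i) (v j) (v l) := Iff.rfl

/-- Under the four quantifiers the variables `3, 2, 1, 0` are `x, w, y, w'` with `c = ⟨x, w⟩` and
`c' = ⟨y, w'⟩`; the bounds are justified by `x, w ≤ ⟨x, w⟩`. -/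
def codeMapF (ρ : ℕ → ℕ → Formula) (r r' : ℕ) : ℕ → ℕ → ℕ → Formula
  | 0, i, j => (Formula.eq (.var i) (numeral r)).fand (.eq (.var j) (numeral r'))
  | n + 1, i, j =>
    .bex (.add (.var i) .one) <| .bex (.add (.var (i + 1)) .one) <|
    .bex (.add (.var (j + 2)) .one) <| .bex (.add (.var (j + 3)) .one) <|
    (pairF 3 2 (i + 4)).fand <| (pairF 1 0 (j + 4)).fand <| (ρ 3 1).fand (codeMapF ρ r r' n 2 0)

theorem Delta0Defines₂.codeMapF (h : PAminus S) {ρ : ℕ → ℕ → Formula}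
    {R : S.carrier → S.carrier → Prop} (hρ : Delta0Defines₂ 𝒳 V ρ R) (r r' n : ℕ) :
    Delta0Defines₂ 𝒳 V (codeMapF ρ r r' n) (CodeMap S R n r r') := by
  induction n with
  | zero =>
    exact fun i j => ⟨⟨trivial, trivial⟩, fun v => by
      simp [RM.codeMapF, Formula.Sat, Term.val, CodeMap.zero_iff]⟩
  | succ n ih =>
    refine fun i j => ⟨⟨trivial, trivial, (hρ 3 1).1, (ih 2 0).1⟩, fun v => ?_⟩
    simp only [RM.codeMapF, Formula.Sat, Term.val, consN_zero, consN_succ, sat_pairF, (hρ 3 1).2,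
      (ih 2 0).2, CodeMap.succ_iff]
    constructor
    · rintro ⟨a, -, w, -, b, -, w', -, hw⟩
      exact ⟨a, w, b, w', hw⟩
    · rintro ⟨a, w, b, w', hc, hc', hw⟩
      have bound {x y z : S.carrier} (hz : pairRel S x y z) :=
        (h.pairRel_le hz).imp h.lt_add_one_iff.2 h.lt_add_one_iff.2
      exact ⟨a, (bound hc).1, w, (bound hc).2, b, (bound hc').1, w', (bound hc').2, hc, hc', hw⟩

end Definability

namespace Delta1CA

variable {S : Struct} {𝒳 : Set (Set S.carrier)} (hCA : Delta1CA S 𝒳)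
include hCA

theorem mem_of_delta0Defines {V : ℕ → Set S.carrier} (hV : ∀ i, V i ∈ 𝒳) {φ : ℕ → Formula}
    {P : S.carrier → Prop} (hφ : Delta0Defines₁ 𝒳 V φ P) : {a | P a} ∈ 𝒳 := by
  have := hCA (φ 0) (φ 0) (.delta0 (hφ 0).1) (.delta0 (hφ 0).1) (fun _ => S.zero) V hV
    fun _ => Iff.rfl
  simpa only [(hφ 0).2, consN_zero] using this

/-- The preimage of a Δ₀ set under a partial function with Δ₀ graph and Δ₀ domain is Δ⁰₁:
`∃ c', T c c' ∧ Θ c'` is equivalent to `D c ∧ ∀ c', T c c' → Θ c'`. -/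
theorem preimage_mem {V : ℕ → Set S.carrier} (hV : ∀ i, V i ∈ 𝒳) {τ : ℕ → ℕ → Formula}
    {δ θ : ℕ → Formula} {T : S.carrier → S.carrier → Prop} {D Θ : S.carrier → Prop}
    (hτ : Delta0Defines₂ 𝒳 V τ T) (hδ : Delta0Defines₁ 𝒳 V δ D) (hθ : Delta0Defines₁ 𝒳 V θ Θ)
    (hD : ∀ c, D c ↔ ∃ c', T c c') (hT : ∀ c c₁ c₂, T c c₁ → T c c₂ → c₁ = c₂) :
    {c | ∃ c', T c c' ∧ Θ c'} ∈ 𝒳 := by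
  have := hCA (.nex ((τ 1 0).fand (θ 0))) (.nall ((δ 1).fand ((τ 1 0).fneg.forr (θ 0))))
    (.ex (.delta0 ⟨(hτ 1 0).1, (hθ 0).1⟩)) (.all (.delta0 ⟨(hδ 1).1, (hτ 1 0).1, (hθ 0).1⟩))
    (fun _ => S.zero) V hV fun c => by
      simp only [Formula.Sat, (hτ 1 0).2, (hθ 0).2, (hδ 1).2, consN_zero, consN_succ]
      constructor
      · rintro ⟨c', hc', hΘ⟩ c''
        exact ⟨(hD c).2 ⟨c', hc'⟩,
          or_iff_not_imp_left.2 fun hc'' => hT c c' c'' hc' (not_not.1 hc'') ▸ hΘ⟩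
      · intro hall
        obtain ⟨c', hc'⟩ := (hD c).1 (hall c).1
        exact ⟨c', hc', (hall c').2.resolve_left (not_not.2 hc')⟩
  simpa only [Formula.Sat, (hτ 1 0).2, (hθ 0).2, consN_zero, consN_succ] using this

theorem union_mem {A B : Set S.carrier} (hA : A ∈ 𝒳) (hB : B ∈ 𝒳) : A ∪ B ∈ 𝒳 :=
  hCA.mem_of_delta0Defines (V := consN A fun _ => B) (fun i => by cases i <;> assumption)
    (φ := fun i => (memF 0 i).forr (memF 1 i)) fun _ => ⟨⟨trivial, trivial⟩, fun _ => Iff.rfl⟩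

theorem diff_mem {A B : Set S.carrier} (hA : A ∈ 𝒳) (hB : B ∈ 𝒳) : A \ B ∈ 𝒳 :=
  hCA.mem_of_delta0Defines (V := consN A fun _ => B) (fun i => by cases i <;> assumption)
    (φ := fun i => (memF 0 i).fand (memF 1 i).fneg) fun _ => ⟨⟨trivial, trivial⟩, fun _ => Iff.rfl⟩

end Delta1CA

section Ramsey

variable {S : Struct} {𝒳 : Set (Set S.carrier)} (h : PAminus S)
include h

theorem rt_of_rt_succ (hCA : Delta1CA S 𝒳) {n k : ℕ} (hRT : RT S 𝒳 n (k + 1)) :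
    RT S 𝒳 n k := by
  intro F f hF hf
  let D := {c | CodeMap S (· = ·) n k k c c}
  have hD : D ∈ 𝒳 := hCA.mem_of_delta0Defines (V := fun _ => F) (fun _ => hF)
    (delta0Defines_eqF.codeMapF h k k n).diag
  have hcode : CodesCol S (F \ D) fun x => (f x).castSucc := by
    intro x hx i c hc
    have hcD : c ∈ D ↔ i = Fin.last k := by
      simp only [D, Set.mem_ofPred_eq, CodeMap.iff_of_tupleCode h hc, Fin.ext_iff, Fin.val_last]
      exact ⟨fun h => h.1, fun hi => ⟨hi, x, fun _ => rfl, hi ▸ hc⟩⟩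
    cases i using Fin.lastCases with
    | last => simp [hcD]
    | cast i => simp [hcD, hf x hx i c hc]
  obtain ⟨H, hH, hU, i, hi⟩ := hRT _ _ (hCA.diff_mem hF hD) hcode
  obtain ⟨x, hx, hxH⟩ := hU.exists_incr h n
  exact ⟨H, hH, hU, f x, fun y hy hyH =>
    Fin.castSucc_injective _ ((hi y hy hyH).trans (hi x hx hxH).symm)⟩

theorem rt_two_of_rt (hCA : Delta1CA S 𝒳) {n k : ℕ} (hk : 2 ≤ k) (hRT : RT S 𝒳 n k) :
    RT S 𝒳 n 2 := by
  induction k, hk using Nat.le_induction with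
  | base => exact hRT
  | succ k _ ih => exact ih (rt_of_rt_succ h hCA hRT)

theorem exists_unbdd_two_valued (hInd : Delta0IndB S 𝒳) (hCA : Delta1CA S 𝒳) {n k : ℕ}
    (hk : 0 < k) (hRT : RT S 𝒳 n k) {F : Set S.carrier} {f : (Fin n → S.carrier) → Fin (k + 1)}
    (hF : F ∈ 𝒳) (hf : CodesCol S F f) :
    ∃ H ∈ 𝒳, Unbdd S H ∧ ∃ i, ∀ x, Incr S x → (∀ j, x j ∈ H) → f x = i ∨ f x = Fin.last k := by
  classical
  let g : (Fin n → S.carrier) → Fin k := fun x =>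
    if hx : f x = Fin.last k then ⟨0, hk⟩ else (f x).castPred hx
  let G := F ∪ {c | ∃ c', CodeMap S (· = ·) n 0 k c c' ∧ c' ∈ F}
  have hG : G ∈ 𝒳 := hCA.union_mem hF <| hCA.preimage_mem (V := fun _ => F) (fun _ => hF)
    (delta0Defines_eqF.codeMapF h 0 k n) (delta0Defines_eqF.codeMapF h 0 0 n).diag
    (delta0Defines_memF 0) (fun _ => (CodeMap.exists_iff h hInd ⟨F, hF⟩ fun a => ⟨a, rfl⟩).symm)
    fun _ _ _ => CodeMap.unique h fun _ _ _ hb hb' => hb.symm.trans hb'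
  have hcode : CodesCol S G g := by
    intro x hx i c hc
    obtain ⟨c', hc'⟩ := h.exists_tupleCode hInd ⟨F, hF⟩ x (ofNat S k)
    have hcG : c ∈ G ↔ f x = i.castSucc ∨ (i.val = 0 ∧ f x = Fin.last k) := by
      simp only [G, Set.mem_union, Set.mem_ofPred_eq, CodeMap.iff_of_tupleCode h hc,
        TupleCode.exists_map_iff h (fun _ _ _ hb hb' => hb.symm.trans hb') (fun _ => rfl) hc',
        hf x hx i.castSucc c hc, ← hf x hx (Fin.last k) c' hc']
      simp
    rw [hcG]
    simp only [g]
    split_ifs with hlast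
    · simp [hlast, (Fin.castSucc_ne_last i).symm, Fin.ext_iff, eq_comm]
    · simp [hlast, Fin.castPred_eq_iff_eq_castSucc]
  obtain ⟨H, hH, hU, i, hi⟩ := hRT G g hG hcode
  refine ⟨H, hH, hU, i.castSucc, fun x hx hxH => ?_⟩
  have := hi x hx hxH
  simp only [g] at this
  split_ifs at this with hlast
  · exact Or.inr hlast
  · exact Or.inl (by rw [← this, Fin.castSucc_castPred])

def NextCodeIn (S : Struct) (H F : Set S.carrier) (i : ℕ) {n : ℕ} (x : Fin n → S.carrier) :
    Prop :=
  ∃ c, (∃ y, (∀ j, IsNext S H (x j) (y j)) ∧ TupleCode S y (ofNat S i) c) ∧ c ∈ F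

open Classical in
theorem exists_codesCol_nextCodeIn (hInd : Delta0IndB S 𝒳) (hCA : Delta1CA S 𝒳) {n : ℕ}
    {F H : Set S.carrier} (hF : F ∈ 𝒳) (hH : H ∈ 𝒳) (hU : Unbdd S H) (i : ℕ) :
    ∃ G ∈ 𝒳, CodesCol S G fun x : Fin n → S.carrier =>
      if NextCodeIn S H F i x then (1 : Fin 2) else 0 := by
  have h𝒳 : 𝒳.Nonempty := ⟨F, hF⟩
  choose nxt hnxt using h.exists_isNext hInd hH hU
  have nxt_unique (a b b' : S.carrier) (hb : IsNext S H a b) (hb' : IsNext S H a b') : b = b' :=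
    hb.unique h hb'
  let T (r : ℕ) := CodeMap S (IsNext S H) n r i
  refine ⟨{c | ∃ c', T 1 c c' ∧ c' ∈ F} ∪ {c | ∃ c', T 0 c c' ∧ c' ∉ F}, ?_, ?_⟩
  · let V := consN F fun _ => H
    have hV (j : ℕ) : V j ∈ 𝒳 := by cases j <;> assumption
    have hT (r : ℕ) := (delta0Defines_nxtF (𝒳 := 𝒳) (V := V) 1).codeMapF h r i n
    have hD (r : ℕ) := (delta0Defines_eqF (𝒳 := 𝒳) (V := V)).codeMapF h r r n |>.diag
    have hdom (r : ℕ) (c : S.carrier) :=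
      (CodeMap.exists_iff (n := n) (r := r) (r' := i) (c := c) h hInd h𝒳 fun a =>
        ⟨nxt a, hnxt a⟩).symm
    exact hCA.union_mem
      (hCA.preimage_mem hV (hT 1) (hD 1) (delta0Defines_memF 0) (hdom 1)
        fun _ _ _ => CodeMap.unique h nxt_unique)
      (hCA.preimage_mem hV (hT 0) (hD 0) (delta0Defines_memF 0).not (hdom 0)
        fun _ _ _ => CodeMap.unique h nxt_unique)
  · intro x _ b c hc
    obtain ⟨c', hc'⟩ := h.exists_tupleCode hInd h𝒳 (nxt ∘ x) (ofNat S i)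
    simp only [T, NextCodeIn, Set.mem_union, Set.mem_ofPred_eq, CodeMap.iff_of_tupleCode h hc,
      TupleCode.exists_map_iff h nxt_unique (fun j => hnxt (x j)) hc']
    fin_cases b <;> simp

theorem exists_unbdd_subset_forall_isNext (hInd : Delta0IndB S 𝒳) (hCA : Delta1CA S 𝒳)
    {H₁ H₂ : Set S.carrier} (hH₁ : H₁ ∈ 𝒳) (hU₁ : Unbdd S H₁) (hH₂ : H₂ ∈ 𝒳) (hU₂ : Unbdd S H₂) :
    ∃ H ∈ 𝒳, Unbdd S H ∧ H ⊆ H₁ ∧ ∀ {n} (y : Fin n → S.carrier), Incr S y → (∀ j, y j ∈ H) →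
      ∃ x, Incr S x ∧ (∀ j, x j ∈ H₂) ∧ ∀ j, IsNext S H₁ (x j) (y j) := by
  refine ⟨{y | ∃ x, S.lt x (S.add y S.one) ∧ x ∈ H₂ ∧ IsNext S H₁ x y}, ?_, fun a => ?_,
    fun y ⟨_, _, _, hy⟩ => hy.1, fun y hy hyH => ?_⟩
  · exact hCA.mem_of_delta0Defines (V := consN H₂ fun _ => H₁) (fun j => by cases j <;> assumption)
      (φ := fun j => .bex (.add (.var j) .one) ((memF 0 0).fand (nxtF 1 0 (j + 1))))
      fun _ => ⟨⟨trivial, trivial, trivial, trivial, trivial⟩, fun _ => Iff.rfl⟩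
  · obtain ⟨x, hxH₂, hax⟩ := hU₂ a
    obtain ⟨y, hy⟩ := h.exists_isNext hInd hH₁ hU₁ x
    exact ⟨y, ⟨x, h.lt_add_one_iff.2 (hy.le h), hxH₂, hy⟩, h.lt_of_lt_of_le hax (hy.le h)⟩
  · choose x _ hxH₂ hxy using hyH
    exact ⟨x, Incr.of_isNext h hxy hy, hxH₂, hxy⟩

theorem exists_unbdd_subset_homog_or (hInd : Delta0IndB S 𝒳) (hCA : Delta1CA S 𝒳) {n K : ℕ}
    (hRT : RT S 𝒳 n 2) {F : Set S.carrier} {f : (Fin n → S.carrier) → Fin K} (hF : F ∈ 𝒳)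
    (hf : CodesCol S F f) {H₁ : Set S.carrier} (hH₁ : H₁ ∈ 𝒳) (hU₁ : Unbdd S H₁) (i : Fin K) :
    ∃ H ∈ 𝒳, Unbdd S H ∧ H ⊆ H₁ ∧ ((∀ x, Incr S x → (∀ j, x j ∈ H) → f x = i) ∨
      (∀ x, Incr S x → (∀ j, x j ∈ H) → f x ≠ i)) := by
  classical
  obtain ⟨G, hG, hcode⟩ := exists_codesCol_nextCodeIn (n := n) h hInd hCA hF hH₁ hU₁ i
  obtain ⟨H₂, hH₂, hU₂, b, hb⟩ := hRT G _ hG hcode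
  obtain ⟨H, hH, hU, hsub, hpull⟩ := exists_unbdd_subset_forall_isNext h hInd hCA hH₁ hU₁ hH₂ hU₂
  have hcolour (y : Fin n → S.carrier) (hy : Incr S y) (hyH : ∀ j, y j ∈ H) :
      (if f y = i then 1 else 0) = b := by
    obtain ⟨x, hx, hxH₂, hxy⟩ := hpull y hy hyH
    obtain ⟨c, hc⟩ := h.exists_tupleCode hInd ⟨F, hF⟩ y (ofNat S i)
    simpa only [NextCodeIn, TupleCode.exists_map_iff h (fun _ _ _ hb hb' => hb.unique h hb') hxy hc,
      exists_eq_left, hf y hy i c hc] using hb x hx hxH₂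
  refine ⟨H, hH, hU, hsub, ?_⟩
  by_cases hb1 : b = 1
  · exact Or.inl fun y hy hyH => by simpa [hb1] using hcolour y hy hyH
  · exact Or.inr fun y hy hyH hfy => hb1 (by simpa [hfy] using (hcolour y hy hyH).symm)

theorem rt_succ_of_rt (hInd : Delta0IndB S 𝒳) (hCA : Delta1CA S 𝒳) {n k : ℕ} (hk : 2 ≤ k)
    (hRT : RT S 𝒳 n k) : RT S 𝒳 n (k + 1) := by
  intro F f hF hf
  obtain ⟨H₁, hH₁, hU₁, i, hi⟩ := exists_unbdd_two_valued h hInd hCA (by omega) hRT hF hf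
  obtain ⟨H, hH, hU, hsub, hlast | hlast⟩ := exists_unbdd_subset_homog_or h hInd hCA
    (rt_two_of_rt h hCA hk hRT) hF hf hH₁ hU₁ (Fin.last k)
  · exact ⟨H, hH, hU, Fin.last k, hlast⟩
  · exact ⟨H, hH, hU, i, fun x hx hxH =>
      (hi x hx fun j => hsub (hxH j)).resolve_right (hlast x hx hxH)⟩

end Ramsey

/-- For each n, k ≥ 2, RCA*₀ proves RT^n_k ↔ RT^n_{k+1}. -/
theorem rt_colour_reduction (n k : ℕ) (hn : 2 ≤ n) (hk : 2 ≤ k)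
    (S : Struct) (𝒳 : Set (Set S.carrier)) (hRCA : RCAstar S 𝒳) :
    RT S 𝒳 n k ↔ RT S 𝒳 n (k + 1) := by
  obtain ⟨h, hInd, -, hCA, -⟩ := hRCA
  exact ⟨rt_succ_of_rt h hInd hCA hk, rt_of_rt_succ h hCA⟩

end RM
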